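/- Let G be a group, N a verbal subgroup of G, and H a verbally closed subgroup of G. Then the image HN/N is a verbally closed subgroup of G/N. -/

import Mathlib

/-- `H` is a retract of `G`: some endomorphism of `G` with image in `H` fixes `H` pointwise. -/
def IsRetract {G : Type*} [Group G] (H : Subgroup G) : Prop :=
  ∃ ρ : G →* G, (∀ g, ρ g ∈ H) ∧ ∀ h ∈ H, ρ h = h

/-- Evaluation of a word with constants in `H` at an assignment `g` of the variables. -/
def wordEval {G : Type*} [Group G] {n : ℕ} (H : Subgroup G)
    (w : FreeGroup (Fin n ⊕ H)) (g : Fin n → G) : G :=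
  FreeGroup.lift (Sum.elim g (fun h : H => (h : G))) w

/-- `H` is algebraically closed in `G`: every finite system of equations with constants
in `H` that has a solution in `G` has a solution in `H`. -/
def IsAlgClosedSubgroup {G : Type*} [Group G] (H : Subgroup G) : Prop :=
  ∀ (n m : ℕ) (w : Fin m → FreeGroup (Fin n ⊕ H)) (h : Fin m → H),
    (∃ g : Fin n → G, ∀ i, wordEval H (w i) g = h i) →
    ∃ g : Fin n → G, (∀ j, g j ∈ H) ∧ ∀ i, wordEval H (w i) g = h i

/-- `H` is verbally closed in `G`: every split equation `w(x₁,…,xₙ) = h`, `h ∈ H`,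
solvable in `G` is solvable in `H`. -/
def IsVerballyClosed {G : Type*} [Group G] (H : Subgroup G) : Prop :=
  ∀ (n : ℕ) (w : FreeGroup (Fin n)) (h : G), h ∈ H →
    (∃ g : Fin n → G, FreeGroup.lift g w = h) →
    ∃ g : Fin n → G, (∀ j, g j ∈ H) ∧ FreeGroup.lift g w = h

/-- `H` is `l`-verbally closed in `G`: every system of `l` split equations with right-hand
sides in `H` that is solvable in `G` is solvable in `H`. -/
def IsLVerballyClosed {G : Type*} [Group G] (H : Subgroup G) (l : ℕ) : Prop :=
  ∀ (n : ℕ) (w : Fin l → FreeGroup (Fin n)) (h : Fin l → G), (∀ i, h i ∈ H) →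
    (∃ g : Fin n → G, ∀ i, FreeGroup.lift g (w i) = h i) →
    ∃ g : Fin n → G, (∀ j, g j ∈ H) ∧ ∀ i, FreeGroup.lift g (w i) = h i

/-- `N` is a verbal subgroup of `G`: it is generated by all values in `G` of some
fixed set of words. -/
def IsVerbalSubgroup {G : Type*} [Group G] (N : Subgroup G) : Prop :=
  ∃ (ι : Type) (n : ι → ℕ) (w : (i : ι) → FreeGroup (Fin (n i))),
    N = Subgroup.closure {x : G | ∃ (i : ι) (g : Fin (n i) → G), FreeGroup.lift g (w i) = x}

/-!
Every element `m` of a verbal subgroup `N` is a value `W(g')` of a single word `W` all of whose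
values lie in `N`: a product of two such values is a value of the product of the two words
written in disjoint sets of variables. So a solution `ḡ` of `w(x) = hN` in `G/N` lifts to a
solution `(g, g')` of the split equation `w(x) W(y) = h` in `G`, verbal closedness of `H` gives a
solution of it in `H`, and projecting to `G/N` kills the factor `W(y)`.
-/

namespace FreeGroup

variable {α β G H : Type*} [Group G] [Group H]

theorem _root_.MonoidHom.map_freeGroupLift (φ : G →* H) (f : α → G) (x : FreeGroup α) :
    φ (lift f x) = lift (φ ∘ f) x := by
  induction x using FreeGroup.induction_on <;> simp_all

theorem lift_map_apply (f : β → G) (φ : α → β) (x : FreeGroup α) :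
    lift f (map φ x) = lift (f ∘ φ) x := by
  induction x using FreeGroup.induction_on <;> simp_all

def concatWords {n k : ℕ} (v : FreeGroup (Fin n)) (u : FreeGroup (Fin k)) :
    FreeGroup (Fin (n + k)) :=
  map (Fin.castAdd k) v * map (Fin.natAdd n) u

variable {n k : ℕ} (v : FreeGroup (Fin n)) (u : FreeGroup (Fin k))

theorem lift_concatWords (f : Fin (n + k) → G) :
    lift f (concatWords v u) = lift (f ∘ Fin.castAdd k) v * lift (f ∘ Fin.natAdd n) u := by
  rw [concatWords, _root_.map_mul, lift_map_apply, lift_map_apply]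

theorem lift_append_concatWords (f : Fin n → G) (g : Fin k → G) :
    lift (Fin.append f g) (concatWords v u) = lift f v * lift g u := by
  have hleft : Fin.append f g ∘ Fin.castAdd k = f := funext (Fin.append_left f g)
  have hright : Fin.append f g ∘ Fin.natAdd n = g := funext (Fin.append_right f g)
  rw [lift_concatWords, hleft, hright]

end FreeGroup

namespace Subgroup

open FreeGroup

variable {G : Type*} [Group G]

def wordValuesInto (N : Subgroup G) : Subgroup G where
  carrier := {m | ∃ (k : ℕ) (W : FreeGroup (Fin k)), (∀ g, lift g W ∈ N) ∧ ∃ g, lift g W = m}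
  one_mem' := ⟨0, 1, fun _ => by simp, Fin.elim0, map_one _⟩
  mul_mem' := by
    rintro _ _ ⟨k₁, W₁, hW₁, g₁, rfl⟩ ⟨k₂, W₂, hW₂, g₂, rfl⟩
    refine ⟨k₁ + k₂, concatWords W₁ W₂, fun g => ?_, Fin.append g₁ g₂, lift_append_concatWords ..⟩
    rw [lift_concatWords]
    exact N.mul_mem (hW₁ _) (hW₂ _)
  inv_mem' := by
    rintro _ ⟨k, W, hW, g, rfl⟩
    exact ⟨k, W⁻¹, fun g' => by simpa using N.inv_mem (hW g'), g, map_inv _ _⟩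

end Subgroup

theorem IsVerbalSubgroup.le_wordValuesInto {G : Type*} [Group G] {N : Subgroup G}
    (hN : IsVerbalSubgroup N) : N ≤ N.wordValuesInto := by
  obtain ⟨ι, n, w, rfl⟩ := hN
  refine (Subgroup.closure_le _).mpr ?_
  rintro _ ⟨i, g, rfl⟩
  exact ⟨n i, w i, fun g' => Subgroup.subset_closure ⟨i, g', rfl⟩, g, rfl⟩

open FreeGroup in
/-- If `N` is a verbal subgroup of `G` and `H` is verbally closed in `G`, then the image
`HN/N` is verbally closed in `G/N`. -/
theorem verballyClosed_map_quotient {G : Type*} [Group G] (N : Subgroup G) [N.Normal]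
    (hN : IsVerbalSubgroup N) (H : Subgroup G) (hH : IsVerballyClosed H) :
    IsVerballyClosed (H.map (QuotientGroup.mk' N)) := by
  rintro n w _ ⟨h, hhH, rfl⟩ ⟨gbar, hgbar⟩
  obtain ⟨g, rfl⟩ := (QuotientGroup.mk'_surjective N).comp_left gbar
  have hgh : (lift g w)⁻¹ * h ∈ N := by
    rw [← QuotientGroup.eq, ← QuotientGroup.mk'_apply, ← QuotientGroup.mk'_apply,
      MonoidHom.map_freeGroupLift]
    exact hgbar
  obtain ⟨k, W, hWN, g', hg'⟩ := hN.le_wordValuesInto hgh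
  obtain ⟨f, hfH, hf⟩ := hH (n + k) (concatWords w W) h hhH
    ⟨Fin.append g g', by rw [lift_append_concatWords, hg', mul_inv_cancel_left]⟩
  refine ⟨QuotientGroup.mk' N ∘ f ∘ Fin.castAdd k, fun j => Subgroup.mem_map_of_mem _ (hfH _), ?_⟩
  rw [lift_concatWords] at hf
  rw [← MonoidHom.map_freeGroupLift, QuotientGroup.mk'_apply, QuotientGroup.mk'_apply,
    QuotientGroup.eq, ← hf, inv_mul_cancel_left]
  exact hWN _
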